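/- With notation as in the Voronoi tiling construction: if φ(T^n x) > 1/2 fails, i.e. φ(T^n x) ≤ 1/2, and the covering condition X = ⋃_{|k|<M₁} T^k F holds with φ = 1 on F and H = (M₁+1)², then W(x,n) = π₁(V(x,n) ∩ (ℝ × {−H})) is empty. Equivalently: W(x,n) ≠ ∅ implies φ(T^n x) > 1/2. -/

import Mathlib

noncomputable section

/-- The point `(a, b)` of the Euclidean plane. -/
def v2 (a b : ℝ) : EuclideanSpace ℝ (Fin 2) :=
  (WithLp.equiv 2 (Fin 2 → ℝ)).symm ![a, b]

/-- The generating point `(n, 1/φ(Tⁿx))` of the Voronoi diagram. -/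
def vpt {X : Type*} (T : Equiv.Perm X) (φ : X → ℝ) (x : X) (n : ℤ) :
    EuclideanSpace ℝ (Fin 2) :=
  v2 (n : ℝ) (1 / φ ((T ^ n) x))

/-- The Voronoi cell `V(x,n)` of the point `(n, 1/φ(Tⁿx))` relative to the discrete set
`S(x) = {(m, 1/φ(Tᵐx)) : φ(Tᵐx) > 0}`. -/
def Vcell {X : Type*} (T : Equiv.Perm X) (φ : X → ℝ) (x : X) (n : ℤ) :
    Set (EuclideanSpace ℝ (Fin 2)) :=
  {u | ∀ m : ℤ, 0 < φ ((T ^ m) x) → dist u (vpt T φ x n) ≤ dist u (vpt T φ x m)}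

/-- The tile `W(x,n) = π₁(V(x,n) ∩ (ℝ × {−H}))` (empty when `φ(Tⁿx) = 0`). -/
def Wtile {X : Type*} (T : Equiv.Perm X) (φ : X → ℝ) (x : X) (H : ℝ) (n : ℤ) :
    Set ℝ :=
  {t | 0 < φ ((T ^ n) x) ∧ v2 t (-H) ∈ Vcell T φ x n}


lemma dist_v2_sq (a b c d : ℝ) :
    dist (v2 a b) (v2 c d) ^ 2 = (a - c) ^ 2 + (b - d) ^ 2 := by
  simp only [v2, EuclideanSpace.dist_eq, Fin.sum_univ_two, Real.dist_eq, sq_abs]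
  exact Real.sq_sqrt (by positivity)

/-- Going down by one unit saves `(H + d)² - (H + b)² ≥ 2 (H + b) + 1` in squared distance. -/
lemma dist_v2_lt_of_add_one_le {t H a b c d : ℝ} (hH : 0 ≤ H + b) (hbd : b + 1 ≤ d)
    (ht : (t - a) ^ 2 < 2 * (H + b) + 1) :
    dist (v2 t (-H)) (v2 a b) < dist (v2 t (-H)) (v2 c d) := by
  refine lt_of_pow_lt_pow_left₀ 2 dist_nonneg ?_
  rw [dist_v2_sq, dist_v2_sq]
  nlinarith [sq_nonneg (t - c)]

lemma exists_abs_sub_lt_of_forall_int {P : ℤ → Prop} {M : ℤ}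
    (hP : ∀ j : ℤ, ∃ k : ℤ, |k - j| < M ∧ P k) (t : ℝ) :
    ∃ k : ℤ, |(k : ℝ) - t| < M ∧ P k := by
  obtain ⟨k, hk, hPk⟩ := hP ⌊t⌋
  have hk' : |(k : ℝ) - ⌊t⌋| ≤ M - 1 := by exact_mod_cast Int.le_sub_one_of_lt hk
  have hfloor : |(⌊t⌋ : ℝ) - t| < 1 := by
    rw [abs_lt]
    constructor <;> linarith [Int.floor_le t, Int.lt_floor_add_one t]
  refine ⟨k, ?_, hPk⟩
  calc |(k : ℝ) - t| ≤ |(k : ℝ) - ⌊t⌋| + |(⌊t⌋ : ℝ) - t| := abs_sub_le _ _ _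
    _ < M := by linarith

theorem stmt15_general {X : Type*} (T : Equiv.Perm X) (φ : X → ℝ)
    (x : X) (M₁ : ℕ)
    (hcov : ∀ j : ℤ, ∃ k : ℤ, |k - j| < (M₁ : ℤ) ∧ φ ((T ^ k) x) = 1)
    (n : ℤ) (hn : φ ((T ^ n) x) ≤ 1 / 2) :
    Wtile T φ x (((M₁ : ℝ) + 1) ^ 2) n = ∅ := by
  refine Set.eq_empty_iff_forall_notMem.2 fun t ⟨hpos, hcell⟩ => ?_
  obtain ⟨k, hkt, hk⟩ := exists_abs_sub_lt_of_forall_int hcov t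
  have hhigh : (1 : ℝ) + 1 ≤ 1 / φ ((T ^ n) x) := by
    rw [le_div_iff₀ hpos]
    linarith
  have hnear : (t - k) ^ 2 < (M₁ : ℝ) ^ 2 := by
    rw [abs_sub_comm] at hkt
    exact sq_lt_sq' (abs_lt.1 hkt).1 (abs_lt.1 hkt).2
  have hlower := dist_v2_lt_of_add_one_le (t := t) (H := ((M₁ : ℝ) + 1) ^ 2) (a := k)
    (c := n) (by positivity) hhigh (by nlinarith)
  refine (hcell k (hk ▸ one_pos)).not_gt ?_
  simpa [vpt, hk] using hlower

/-- under the covering condition (every `j ∈ ℤ` is within `M₁` of some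
`k` with `φ(Tᵏx) = 1`), if `φ(Tⁿx) ≤ 1/2` then the tile `W(x,n)` at height
`H = (M₁+1)²` is empty; equivalently `W(x,n) ≠ ∅` forces `φ(Tⁿx) > 1/2`. -/
theorem stmt15 {X : Type*} (T : Equiv.Perm X) (φ : X → ℝ)
    (hφ : ∀ y, φ y ∈ Set.Icc (0 : ℝ) 1) (x : X) (M₁ : ℕ)
    (hcov : ∀ j : ℤ, ∃ k : ℤ, |k - j| < (M₁ : ℤ) ∧ φ ((T ^ k) x) = 1)
    (n : ℤ) (hn : φ ((T ^ n) x) ≤ 1 / 2) :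
    Wtile T φ x (((M₁ : ℝ) + 1) ^ 2) n = ∅ :=
  stmt15_general T φ x M₁ hcov n hn
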